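/- Under the hypotheses of the power method convergence lemma (compact self-adjoint T with gapped positive top eigenvalue λ₁, initialization correlation ≥ η), if additionally k ≥ log(η/(4‖u₀‖))/log(1-γ), then the rank-one approximating factor satisfies ‖√(u_kᵀ T u_k)·u_k - √λ₁·sign(⟨v₁,u₀⟩)·v₁‖² ≤ 18·λ₁·(1-γ)^{2k}·‖u₀‖²/η². -/

import Mathlib

open Real MeasureTheory
open scoped RealInnerProductSpace

/-!
Expanding in the eigenbasis, `⟪v j, Tⁿ u₀⟫ = λⱼⁿ ⟪v j, u₀⟫`. So `Tᵏ u₀` has component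
`λ₀ᵏ |⟪v₀, u₀⟫| ≥ λ₀ᵏ η` along `w = sign ⟪v₀, u₀⟫ • v₀`, and by the spectral gap the rest has
norm at most `((1 - γ) λ₀)ᵏ ‖u₀‖`. Hence the normalized iterate satisfies
`‖u k - w‖² ≤ 2 (1 - γ)^{2k} ‖u₀‖² / η²`. Since `⟪w, T w⟫ = λ₀ = ‖T‖`, the Rayleigh quotient
`⟪u k, T (u k)⟫` is within `2 λ₀ ‖u k - w‖` of `λ₀`, its square root within `2 √λ₀ ‖u k - w‖`
of `√λ₀`, and the rank-one factor within `3 √λ₀ ‖u k - w‖` of `√λ₀ • w`.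
-/

theorem Real.sign_mul_self_eq_abs (r : ℝ) : Real.sign r * r = |r| := by
  rcases lt_trichotomy r 0 with h | rfl | h
  · rw [sign_of_neg h, abs_of_neg h, neg_one_mul]
  · simp
  · rw [sign_of_pos h, abs_of_pos h, one_mul]

theorem Real.abs_sqrt_sub_sqrt_mul_sqrt_le (x : ℝ) {y : ℝ} (hy : 0 ≤ y) :
    |√x - √y| * √y ≤ |x - y| := by
  rcases le_total 0 x with hx | hx
  · calc |√x - √y| * √y ≤ |√x - √y| * (√x + √y) := by
          gcongr; exact le_add_of_nonneg_left (sqrt_nonneg x)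
      _ = |x - y| := by
        rw [← abs_of_nonneg (add_nonneg (sqrt_nonneg x) (sqrt_nonneg y)), ← abs_mul]
        congr 1
        linear_combination mul_self_sqrt hx - mul_self_sqrt hy
  · rw [sqrt_eq_zero'.mpr hx, zero_sub, abs_neg, abs_of_nonneg (sqrt_nonneg y), mul_self_sqrt hy,
      abs_of_nonpos (by linarith)]
    linarith

theorem norm_sign_smul {F : Type*} [SeminormedAddCommGroup F] [NormedSpace ℝ F] {r : ℝ}
    (hr : r ≠ 0) (e : F) : ‖Real.sign r • e‖ = ‖e‖ := by
  rcases Real.sign_apply_eq_of_ne_zero r hr with h | h <;> simp [h]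

section Normed
variable {E : Type*} [NormedAddCommGroup E] [NormedSpace ℝ E]

theorem inv_norm_smul_map_inv_norm_smul (T : E →L[ℝ] E) (x : E) :
    ‖T (‖x‖⁻¹ • x)‖⁻¹ • T (‖x‖⁻¹ • x) = ‖T x‖⁻¹ • T x := by
  rcases eq_or_ne x 0 with rfl | hx
  · simp
  have hc : 0 < ‖x‖⁻¹ := inv_pos.mpr (norm_pos_iff.mpr hx)
  rw [map_smul, norm_smul, Real.norm_of_nonneg hc.le, smul_smul, mul_inv, inv_inv,
    mul_right_comm, mul_inv_cancel₀ (norm_ne_zero_iff.mpr hx), one_mul]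

theorem eq_inv_norm_smul_pow_apply_zero (T : E →L[ℝ] E) {u : ℕ → E}
    (hu : ∀ k, u (k + 1) = ‖T (u k)‖⁻¹ • T (u k)) {n : ℕ} (hn : 1 ≤ n) :
    u n = ‖(T ^ n) (u 0)‖⁻¹ • (T ^ n) (u 0) := by
  induction n, hn using Nat.le_induction with
  | base => simpa using hu 0
  | succ n _ ih => rw [hu, ih, inv_norm_smul_map_inv_norm_smul, pow_succ', mul_apply_eq_comp]

end Normed

section InnerProductSpace
variable {E : Type*} [NormedAddCommGroup E] [InnerProductSpace ℝ E]

theorem abs_inner_map_self_sub_le (T : E →L[ℝ] E) {u w : E} (hu : ‖u‖ = 1) (hw : ‖w‖ = 1) :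
    |⟪u, T u⟫ - ⟪w, T w⟫| ≤ 2 * ‖T‖ * ‖u - w‖ := by
  have hsplit : ⟪u, T u⟫ - ⟪w, T w⟫ = ⟪u - w, T u⟫ + ⟪w, T (u - w)⟫ := by
    rw [map_sub, inner_sub_left, inner_sub_right]; ring
  calc |⟪u, T u⟫ - ⟪w, T w⟫| ≤ ‖u - w‖ * ‖T u‖ + ‖w‖ * ‖T (u - w)‖ := by
        rw [hsplit]
        exact (abs_add_le _ _).trans
          (add_le_add (abs_real_inner_le_norm _ _) (abs_real_inner_le_norm _ _))
    _ ≤ ‖u - w‖ * (‖T‖ * ‖u‖) + ‖w‖ * (‖T‖ * ‖u - w‖) := by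
        gcongr <;> exact T.le_opNorm _
    _ = 2 * ‖T‖ * ‖u - w‖ := by rw [hu, hw]; ring

theorem norm_sqrt_inner_smul_sub_le (T : E →L[ℝ] E) {u w : E} (hu : ‖u‖ = 1) (hw : ‖w‖ = 1)
    (hTw : ⟪w, T w⟫ = ‖T‖) (hT : 0 < ‖T‖) :
    ‖√⟪u, T u⟫ • u - √‖T‖ • w‖ ≤ 3 * √‖T‖ * ‖u - w‖ := by
  have hr : 0 < √‖T‖ := sqrt_pos.mpr hT
  have hsqrt : |√⟪u, T u⟫ - √‖T‖| ≤ 2 * √‖T‖ * ‖u - w‖ := by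
    refine le_of_mul_le_mul_right ?_ hr
    calc |√⟪u, T u⟫ - √‖T‖| * √‖T‖ ≤ |⟪u, T u⟫ - ‖T‖| := abs_sqrt_sub_sqrt_mul_sqrt_le _ hT.le
      _ ≤ 2 * ‖T‖ * ‖u - w‖ := hTw ▸ abs_inner_map_self_sub_le T hu hw
      _ = 2 * √‖T‖ * ‖u - w‖ * √‖T‖ := by
          linear_combination (-2 * ‖u - w‖) * mul_self_sqrt hT.le
  have hsplit : √⟪u, T u⟫ • u - √‖T‖ • w = √‖T‖ • (u - w) + (√⟪u, T u⟫ - √‖T‖) • u := by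
    rw [smul_sub, sub_smul]; abel
  calc ‖√⟪u, T u⟫ • u - √‖T‖ • w‖ ≤ √‖T‖ * ‖u - w‖ + |√⟪u, T u⟫ - √‖T‖| := by
        rw [hsplit]
        refine (norm_add_le _ _).trans_eq ?_
        rw [norm_smul, norm_smul, hu, Real.norm_of_nonneg hr.le, Real.norm_eq_abs, mul_one]
    _ ≤ 3 * √‖T‖ * ‖u - w‖ := by linarith

theorem norm_inv_norm_smul_sub_sq_le {w x : E} (hw : ‖w‖ = 1) (hx : 0 < ⟪w, x⟫) :
    ‖‖x‖⁻¹ • x - w‖ ^ 2 ≤ 2 * (‖x‖ ^ 2 - ⟪w, x⟫ ^ 2) / ⟪w, x⟫ ^ 2 := by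
  set a := ⟪w, x⟫
  have ha : a ≤ ‖x‖ := (real_inner_le_norm w x).trans_eq (by rw [hw, one_mul])
  have hN : 0 < ‖x‖ := hx.trans_le ha
  have hexpand : ‖‖x‖⁻¹ • x - w‖ ^ 2 = 2 * (‖x‖ - a) / ‖x‖ := by
    rw [norm_sub_sq_real, norm_smul, inner_smul_left, real_inner_comm, norm_inv, norm_norm, hw,
      conj_trivial, inv_mul_cancel₀ hN.ne']
    field_simp
    ring
  rw [hexpand, div_le_div_iff₀ hN (by positivity)]
  nlinarith [mul_le_mul_of_nonneg_left ha hx.le, sq_nonneg (‖x‖ - a)]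

theorem Orthonormal.hasSum_inner_sq [CompleteSpace E] {ι : Type*} {v : ι → E}
    (hv : Orthonormal ℝ v) (hsp : (Submodule.span ℝ (Set.range v)).topologicalClosure = ⊤)
    (x : E) : HasSum (fun i => ⟪v i, x⟫ ^ 2) (‖x‖ ^ 2) := by
  have h := (HilbertBasis.mk hv hsp.ge).hasSum_inner_mul_inner x x
  simp only [HilbertBasis.coe_mk, real_inner_self_eq_norm_sq] at h
  simpa only [real_inner_comm x, sq] using h

theorem inner_pow_apply_of_apply_eq_smul {T : E →L[ℝ] E} (hT : (T : E →ₗ[ℝ] E).IsSymmetric)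
    {e : E} {μ : ℝ} (he : T e = μ • e) (n : ℕ) (x : E) : ⟪e, (T ^ n) x⟫ = μ ^ n * ⟪e, x⟫ := by
  induction n with
  | zero => simp
  | succ n ih =>
    rw [pow_succ', mul_apply_eq_comp, ← ContinuousLinearMap.coe_coe, ← hT,
      ContinuousLinearMap.coe_coe, he, real_inner_smul_left, ih, pow_succ]
    ring

variable [CompleteSpace E] {T : E →L[ℝ] E} {lam : ℕ → ℝ} {v : ℕ → E}

theorem norm_pow_apply_sq_le (hT : (T : E →ₗ[ℝ] E).IsSymmetric) (hv : Orthonormal ℝ v)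
    (hsp : (Submodule.span ℝ (Set.range v)).topologicalClosure = ⊤)
    (heig : ∀ j, T (v j) = lam j • v j) {ρ : ℝ} (hgap : ∀ j ≠ 0, |lam j| ≤ ρ) (n : ℕ) (x : E) :
    ‖(T ^ n) x‖ ^ 2 ≤ (lam 0 ^ n * ⟪v 0, x⟫) ^ 2 + ρ ^ (2 * n) * ‖x‖ ^ 2 := by
  have hsum := hv.hasSum_inner_sq hsp ((T ^ n) x)
  simp only [inner_pow_apply_of_apply_eq_smul hT (heig _)] at hsum
  refine hasSum_le (fun j => ?_) hsum
    ((hasSum_ite_eq 0 _).add ((hv.hasSum_inner_sq hsp x).mul_left (ρ ^ (2 * n))))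
  rcases eq_or_ne j 0 with rfl | hj
  · have : 0 ≤ ρ ^ (2 * n) * ⟪v 0, x⟫ ^ 2 := by rw [pow_mul]; positivity
    simpa only [if_pos] using le_add_of_nonneg_right this
  · have hsq : lam j ^ 2 ≤ ρ ^ 2 := sq_le_sq.mpr ((hgap j hj).trans (le_abs_self ρ))
    rw [if_neg hj, zero_add, mul_pow, ← pow_mul, mul_comm n 2, pow_mul, pow_mul]
    gcongr ?_ * _
    exact pow_le_pow_left₀ (sq_nonneg _) hsq n

theorem power_method_norm_sub_sq_le (hT : (T : E →ₗ[ℝ] E).IsSymmetric) (hv : Orthonormal ℝ v)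
    (hsp : (Submodule.span ℝ (Set.range v)).topologicalClosure = ⊤)
    (heig : ∀ j, T (v j) = lam j • v j) (hlam : 0 < lam 0) {γ : ℝ}
    (hgap : ∀ j ≠ 0, γ * lam 0 ≤ lam 0 - |lam j|) {u : ℕ → E}
    (hu : ∀ k, u (k + 1) = ‖T (u k)‖⁻¹ • T (u k)) {η : ℝ} (hη : 0 < η)
    (hcorr : η ≤ |⟪v 0, u 0⟫|) {k : ℕ} (hk : 1 ≤ k) :
    ‖u k - Real.sign ⟪v 0, u 0⟫ • v 0‖ ^ 2 ≤ 2 * (1 - γ) ^ (2 * k) * ‖u 0‖ ^ 2 / η ^ 2 := by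
  set c := ⟪v 0, u 0⟫
  set w := Real.sign c • v 0
  set x := (T ^ k) (u 0)
  have hc : c ≠ 0 := abs_pos.mp (hη.trans_le hcorr)
  have hw : ‖w‖ = 1 := by rw [norm_sign_smul hc, hv.1 0]
  have hinner : ⟪w, x⟫ = lam 0 ^ k * |c| := by
    rw [real_inner_smul_left, inner_pow_apply_of_apply_eq_smul hT (heig 0),
      ← Real.sign_mul_self_eq_abs]
    ring
  have hinner_ge : lam 0 ^ k * η ≤ ⟪w, x⟫ := by rw [hinner]; gcongr
  have htail : ‖x‖ ^ 2 - ⟪w, x⟫ ^ 2 ≤ ((1 - γ) * lam 0) ^ (2 * k) * ‖u 0‖ ^ 2 := by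
    have := norm_pow_apply_sq_le hT hv hsp heig (ρ := (1 - γ) * lam 0)
      (fun j hj => by linarith [hgap j hj]) k (u 0)
    rw [hinner, mul_pow, sq_abs, ← mul_pow]
    linarith
  rw [eq_inv_norm_smul_pow_apply_zero T hu hk]
  calc ‖‖x‖⁻¹ • x - w‖ ^ 2 ≤ 2 * (‖x‖ ^ 2 - ⟪w, x⟫ ^ 2) / ⟪w, x⟫ ^ 2 :=
        norm_inv_norm_smul_sub_sq_le hw (lt_of_lt_of_le (by positivity) hinner_ge)
    _ ≤ 2 * (((1 - γ) * lam 0) ^ (2 * k) * ‖u 0‖ ^ 2) / (lam 0 ^ k * η) ^ 2 := by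
        have : 0 ≤ ((1 - γ) * lam 0) ^ (2 * k) := by rw [pow_mul]; positivity
        gcongr
    _ = 2 * (1 - γ) ^ (2 * k) * ‖u 0‖ ^ 2 / η ^ 2 := by
        rw [mul_pow, mul_pow, ← pow_mul, mul_comm k 2]
        field_simp

end InnerProductSpace

theorem stmt8_general
    (T : Lp ℝ 2 (volume : Measure ℝ) →L[ℝ] Lp ℝ 2 (volume : Measure ℝ))
    (hTsa : ∀ x y : Lp ℝ 2 (volume : Measure ℝ), ⟪T x, y⟫ = ⟪x, T y⟫)
    (lam : ℕ → ℝ) (v : ℕ → Lp ℝ 2 (volume : Measure ℝ))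
    (horth : Orthonormal ℝ v)
    (hspan : (Submodule.span ℝ (Set.range v)).topologicalClosure = ⊤)
    (heig : ∀ k, T (v k) = lam k • v k)
    (htop : ‖T‖ = lam 0) (htoppos : 0 < lam 0)
    (γ : ℝ)
    (hgap : ∀ k : ℕ, k ≠ 0 → γ * lam 0 ≤ lam 0 - |lam k|)
    (u₀ : Lp ℝ 2 (volume : Measure ℝ)) (η : ℝ) (hη : 0 < η)
    (hcorr : η ≤ |⟪v 0, u₀⟫|)
    (u : ℕ → Lp ℝ 2 (volume : Measure ℝ)) (hu0 : u 0 = u₀)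
    (hurec : ∀ k, u (k + 1) = ‖T (u k)‖⁻¹ • T (u k)) :
    ∀ k : ℕ, 1 ≤ k →
      Real.log (η / (4 * ‖u₀‖)) / Real.log (1 - γ) ≤ (k : ℝ) →
      ‖Real.sqrt ⟪u k, T (u k)⟫ • u k
          - (Real.sqrt (lam 0) * Real.sign ⟪v 0, u₀⟫) • v 0‖ ^ 2
        ≤ 18 * lam 0 * (1 - γ) ^ (2 * k) * ‖u₀‖ ^ 2 / η ^ 2 := by
  intro k hk _
  subst hu0
  set w := Real.sign ⟪v 0, u 0⟫ • v 0
  have hc : ⟪v 0, u 0⟫ ≠ 0 := abs_pos.mp (hη.trans_le hcorr)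
  have hw : ‖w‖ = 1 := by rw [norm_sign_smul hc, horth.1 0]
  have hTw : ⟪w, T w⟫ = ‖T‖ := by
    rw [map_smul, heig, smul_comm, real_inner_smul_right, real_inner_self_eq_norm_sq, hw, htop]
    ring
  have hx : (T ^ k) (u 0) ≠ 0 := fun h => by
    simpa [h, htoppos.ne', hc] using inner_pow_apply_of_apply_eq_smul hTsa (heig 0) k (u 0)
  have hu : ‖u k‖ = 1 := by
    rw [eq_inv_norm_smul_pow_apply_zero T hurec hk]
    exact norm_smul_inv_norm hx
  calc ‖√⟪u k, T (u k)⟫ • u k - (√(lam 0) * Real.sign ⟪v 0, u 0⟫) • v 0‖ ^ 2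
      = ‖√⟪u k, T (u k)⟫ • u k - √‖T‖ • w‖ ^ 2 := by rw [htop, mul_smul]
    _ ≤ (3 * √‖T‖ * ‖u k - w‖) ^ 2 := by
        gcongr; exact norm_sqrt_inner_smul_sub_le T hu hw hTw (htop ▸ htoppos)
    _ = 9 * lam 0 * ‖u k - w‖ ^ 2 := by
        rw [mul_pow, mul_pow, sq_sqrt (norm_nonneg _), htop]; ring
    _ ≤ 9 * lam 0 * (2 * (1 - γ) ^ (2 * k) * ‖u 0‖ ^ 2 / η ^ 2) := by
        gcongr
        exact power_method_norm_sub_sq_le hTsa horth hspan heig htoppos hgap hurec hη hcorr hk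
    _ = 18 * lam 0 * (1 - γ) ^ (2 * k) * ‖u 0‖ ^ 2 / η ^ 2 := by ring

/-- Rank-one approximating factor bound for the power method: under the
hypotheses of the power-method convergence lemma (compact self-adjoint `T`
with gapped positive top eigenvalue `λ₀ = ‖T‖`, initialization correlation
`|⟨v₀,u₀⟩| ≥ η`), if additionally `k ≥ log(η/(4‖u₀‖))/log(1-γ)`, then
`‖√(⟨u_k, T u_k⟩)·u_k - √λ₀·sign(⟨v₀,u₀⟩)·v₀‖² ≤ 18λ₀(1-γ)^{2k}‖u₀‖²/η²`. -/
theorem stmt8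
    (T : Lp ℝ 2 (volume : Measure ℝ) →L[ℝ] Lp ℝ 2 (volume : Measure ℝ))
    (hTcpt : IsCompactOperator T)
    (hTsa : ∀ x y : Lp ℝ 2 (volume : Measure ℝ), ⟪T x, y⟫ = ⟪x, T y⟫)
    (lam : ℕ → ℝ) (v : ℕ → Lp ℝ 2 (volume : Measure ℝ))
    (horth : Orthonormal ℝ v)
    (hspan : (Submodule.span ℝ (Set.range v)).topologicalClosure = ⊤)
    (heig : ∀ k, T (v k) = lam k • v k)
    (htop : ‖T‖ = lam 0) (htoppos : 0 < lam 0)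
    (γ : ℝ) (hγ0 : 0 < γ) (hγ1 : γ ≤ 1)
    (hgap : ∀ k : ℕ, k ≠ 0 → γ * lam 0 ≤ lam 0 - |lam k|)
    (u₀ : Lp ℝ 2 (volume : Measure ℝ)) (η : ℝ) (hη : 0 < η)
    (hcorr : η ≤ |⟪v 0, u₀⟫|)
    (u : ℕ → Lp ℝ 2 (volume : Measure ℝ)) (hu0 : u 0 = u₀)
    (hurec : ∀ k, u (k + 1) = ‖T (u k)‖⁻¹ • T (u k)) :
    ∀ k : ℕ, 1 ≤ k →
      Real.log (η / (4 * ‖u₀‖)) / Real.log (1 - γ) ≤ (k : ℝ) →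
      ‖Real.sqrt ⟪u k, T (u k)⟫ • u k
          - (Real.sqrt (lam 0) * Real.sign ⟪v 0, u₀⟫) • v 0‖ ^ 2
        ≤ 18 * lam 0 * (1 - γ) ^ (2 * k) * ‖u₀‖ ^ 2 / η ^ 2 :=
  stmt8_general T hTsa lam v horth hspan heig htop htoppos γ hgap u₀ η hη hcorr u hu0 hurec
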